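/- arXiv:2204.05837 — 4 statements merged into one kernel-verified Lean document; each statement's English description precedes it below -/
import Mathlib

section
/- Let m ∈ ℕ with m ≥ 1 and C₀ > 0. There exists R₁ > 0, depending only on m and C₀, for which the following holds. Let E ⊂ ℝ be a bounded open set, η₁,…,η_m ∈ ℝ, R ≥ R₁, and set 𝓑_R := ⋃_{j=1}^m (η_j − R, η_j + R). Let W : E → ℝ be measurable with 0 ≤ W(y) ≤ Σ_{j=1}^m C₀/|y − η_j|² for all y ∈ E ∖ 𝓑_R. If ψ : ℝ → ℝ is bounded and continuous, ψ ≥ 0 on 𝓑_R ∪ (ℝ ∖ E), and for every y ∈ E ∖ 𝓑_R the principal-value limit defining (−Δ)^{1/2}ψ(y) exists and satisfies (−Δ)^{1/2}ψ(y) − W(y)·ψ(y) ≥ 0, then ψ ≥ 0 on all of ℝ. -/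
open MeasureTheory Filter Set

/-!
Let `x₀` be a global minimum of `ψ` with `ψ x₀ < 0`; it lies in `E` outside the balls, at distance
`d ≥ R` from the nearest centre `η j`. At a global minimum the integrand `(ψ x₀ - ψ (x₀ + z)) / z²`
of the half-Laplacian is nonpositive, and on the half of `(η j - R, η j + R)` facing away from `x₀`
(length `R`, distance between `d` and `2d`, where `ψ ≥ 0`) it is at most `ψ x₀ / (4d²)`.
Hence `(-Δ)^{1/2} ψ (x₀) ≤ R ψ x₀ / (4π d²)`, while the supersolution inequality and
`W x₀ ≤ m C₀ / d²` give `(-Δ)^{1/2} ψ (x₀) ≥ m C₀ ψ x₀ / d²`. As `ψ x₀ < 0` this forces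
`R ≤ 4π m C₀`, so `R₁ = 4π m C₀ + 1` works.
-/

/-- The truncated integral appearing in the principal-value definition of the
half-Laplacian: `(1/π) ∫_{|z| ≥ δ} (u(x) - u(x+z))/z² dz`. -/
noncomputable def pvHalfLap (u : ℝ → ℝ) (x δ : ℝ) : ℝ :=
  (1 / Real.pi) * ∫ z in {z : ℝ | δ ≤ |z|}, (u x - u (x + z)) / z ^ 2

/-- `HasHalfLapAt u x L` means that the principal-value limit defining
`(-Δ)^{1/2} u (x)` exists and equals `L`. -/
def HasHalfLapAt (u : ℝ → ℝ) (x L : ℝ) : Prop :=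
  Tendsto (fun δ => pvHalfLap u x δ) (nhdsWithin 0 (Ioi 0)) (nhds L)

open Real

lemma integrableOn_inv_sq_of_le_abs {δ : ℝ} (hδ : 0 < δ) :
    IntegrableOn (fun z : ℝ => (z ^ 2)⁻¹) {z | δ ≤ |z|} := by
  have hIci : IntegrableOn (fun z : ℝ => (z ^ 2)⁻¹) (Ici δ) := by
    rw [integrableOn_Ici_iff_integrableOn_Ioi]
    refine (integrableOn_Ioi_rpow_of_lt (by norm_num : (-2 : ℝ) < -1) hδ).congr_fun
      (fun z hz => ?_) measurableSet_Ioi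
    simp [rpow_neg (hδ.trans hz).le]
  have hIic : IntegrableOn (fun z : ℝ => (z ^ 2)⁻¹) (Iic (-δ)) := by
    rw [← (Measure.measurePreserving_neg volume).integrableOn_comp_preimage
      (Homeomorph.neg ℝ).measurableEmbedding]
    simpa [Function.comp_def] using hIci
  have hset : {z : ℝ | δ ≤ |z|} = Iic (-δ) ∪ Ici δ := by
    ext z
    simp [le_abs, or_comm, le_neg]
  rw [hset]
  exact hIic.union hIci

lemma exists_Ioo_far_half {x η R : ℝ} (hR : R ≤ |x - η|) : ∃ p, ∀ z ∈ Ioo p (p + R),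
    |x - η| ≤ |z| ∧ |z| ≤ 2 * |x - η| ∧ x + z ∈ Ioo (η - R) (η + R) := by
  rcases le_total x η with hxη | hηx
  · rw [abs_of_nonpos (sub_nonpos.2 hxη)] at hR ⊢
    refine ⟨η - x, fun z ⟨hz₁, hz₂⟩ => ?_⟩
    rw [abs_of_pos (by linarith)]
    refine ⟨?_, ?_, ?_, ?_⟩ <;> linarith
  · rw [abs_of_nonneg (sub_nonneg.2 hηx)] at hR ⊢
    refine ⟨η - x - R, fun z ⟨hz₁, hz₂⟩ => ?_⟩
    rw [abs_of_neg (by linarith)]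
    refine ⟨?_, ?_, ?_, ?_⟩ <;> linarith

section HalfLaplacian

variable {u : ℝ → ℝ} {M x : ℝ}

lemma integrableOn_halfLap_integrand (hu : Measurable u) (hM : ∀ y, |u y| ≤ M) {δ : ℝ}
    (hδ : 0 < δ) : IntegrableOn (fun z => (u x - u (x + z)) / z ^ 2) {z | δ ≤ |z|} := by
  refine ((integrableOn_inv_sq_of_le_abs hδ).const_mul (2 * M)).mono'
    (by fun_prop : Measurable fun z => (u x - u (x + z)) / z ^ 2).aestronglyMeasurable ?_
  filter_upwards with z
  rw [norm_div, norm_pow, Real.norm_eq_abs, Real.norm_eq_abs, sq_abs, div_eq_mul_inv]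
  gcongr
  exact (abs_sub _ _).trans (by linarith [hM x, hM (x + z)])

lemma pvHalfLap_le_setIntegral (hu : Measurable u) (hM : ∀ y, |u y| ≤ M)
    (hmin : ∀ y, u x ≤ u y) {δ : ℝ} (hδ : 0 < δ) {S : Set ℝ} (hS : S ⊆ {z | δ ≤ |z|}) :
    pvHalfLap u x δ ≤ (1 / π) * ∫ z in S, (u x - u (x + z)) / z ^ 2 := by
  have hneg : ∫ z in S, -((u x - u (x + z)) / z ^ 2) ≤
      ∫ z in {z | δ ≤ |z|}, -((u x - u (x + z)) / z ^ 2) :=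
    setIntegral_mono_set (integrableOn_halfLap_integrand hu hM hδ).neg
      (Eventually.of_forall fun z => neg_nonneg.2 <|
        div_nonpos_of_nonpos_of_nonneg (sub_nonpos.2 (hmin _)) (sq_nonneg z))
      hS.eventuallyLE
  rw [integral_neg, integral_neg, neg_le_neg_iff] at hneg
  exact mul_le_mul_of_nonneg_left hneg (by positivity)

lemma HasHalfLapAt.le_of_forall_le {L : ℝ} (hL : HasHalfLapAt u x L) (hu : Measurable u)
    (hM : ∀ y, |u y| ≤ M) (hmin : ∀ y, u x ≤ u y) (hux : u x ≤ 0) {a b r ρ : ℝ} (hab : a ≤ b)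
    (hr : 0 < r) (hJ : ∀ z ∈ Ioo a b, r ≤ |z| ∧ |z| ≤ ρ ∧ 0 ≤ u (x + z)) :
    L ≤ (b - a) * u x / (π * ρ ^ 2) := by
  have hpv : ∀ δ ∈ Ioo 0 r, pvHalfLap u x δ ≤ (b - a) * u x / (π * ρ ^ 2) := by
    intro δ ⟨hδ, hδr⟩
    calc pvHalfLap u x δ ≤ (1 / π) * ∫ z in Ioo a b, (u x - u (x + z)) / z ^ 2 :=
          pvHalfLap_le_setIntegral hu hM hmin hδ fun z hz => hδr.le.trans (hJ z hz).1
      _ ≤ (1 / π) * ∫ _ in Ioo a b, u x / ρ ^ 2 := by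
          refine mul_le_mul_of_nonneg_left (setIntegral_mono_on
            ((integrableOn_halfLap_integrand hu hM hδ).mono_set
              fun z hz => hδr.le.trans (hJ z hz).1)
            (integrableOn_const measure_Ioo_lt_top.ne) measurableSet_Ioo fun z hz => ?_)
            (by positivity)
          obtain ⟨hrz, hzρ, huz⟩ := hJ z hz
          have hz : 0 < z ^ 2 := by simpa only [sq_abs] using pow_pos (hr.trans_le hrz) 2
          calc (u x - u (x + z)) / z ^ 2 ≤ u x / z ^ 2 := by gcongr; linarith
            _ ≤ u x / ρ ^ 2 := by
                rw [div_eq_mul_inv, div_eq_mul_inv]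
                refine mul_le_mul_of_nonpos_left (inv_anti₀ hz ?_) hux
                simpa only [sq_abs] using pow_le_pow_left₀ (abs_nonneg z) hzρ 2
      _ = (b - a) * u x / (π * ρ ^ 2) := by
          rw [setIntegral_const, volume_real_Ioo_of_le hab, smul_eq_mul]
          field_simp
  exact le_of_tendsto hL (eventually_of_mem (Ioo_mem_nhdsGT hr) hpv)

lemma HasHalfLapAt.le_of_nonneg_on_Ioo {L : ℝ} (hL : HasHalfLapAt u x L) (hu : Measurable u)
    (hM : ∀ y, |u y| ≤ M) (hmin : ∀ y, u x ≤ u y) (hux : u x ≤ 0) {η R : ℝ} (hR : 0 < R)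
    (hRx : R ≤ |x - η|) (hu_nonneg : ∀ y ∈ Ioo (η - R) (η + R), 0 ≤ u y) :
    L ≤ R * u x / (4 * π * |x - η| ^ 2) := by
  obtain ⟨p, hp⟩ := exists_Ioo_far_half hRx
  have h := hL.le_of_forall_le hu hM hmin hux (by linarith) (hR.trans_le hRx)
    fun z hz => ⟨(hp z hz).1, (hp z hz).2.1, hu_nonneg _ (hp z hz).2.2⟩
  rwa [add_sub_cancel_left, mul_pow, ← mul_assoc, mul_comm π,
    show (2 : ℝ) ^ 2 = 4 by norm_num] at h

end HalfLaplacian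

lemma le_abs_sub_of_notMem_iUnion_Ioo {ι : Type*} {η : ι → ℝ} {R x : ℝ}
    (hx : x ∉ ⋃ j, Ioo (η j - R) (η j + R)) (k : ι) : R ≤ |x - η k| :=
  not_lt.1 fun h => hx <| mem_iUnion.2 ⟨k, by rw [abs_lt] at h; constructor <;> linarith⟩

lemma Continuous.exists_forall_le_of_nonneg_compl {E : Set ℝ} (hE : Bornology.IsBounded E)
    {u : ℝ → ℝ} (hu : Continuous u) (hu_nonneg : ∀ y ∉ E, 0 ≤ u y) {y₀ : ℝ} (hy₀ : u y₀ < 0) :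
    ∃ x, (∀ y, u x ≤ u y) ∧ u x < 0 := by
  obtain ⟨x, hx⟩ := hu.exists_forall_le' y₀ <|
    mem_of_superset hE.isCompact_closure.compl_mem_cocompact fun y hy =>
      hy₀.le.trans (hu_nonneg y fun h => hy (subset_closure h))
  exact ⟨x, hx, (hx y₀).trans_lt hy₀⟩

lemma sum_div_sq_abs_sub_le {m : ℕ} {C d x : ℝ} (hC : 0 ≤ C) (hd : 0 < d) {η : Fin m → ℝ}
    (hη : ∀ k, d ≤ |x - η k|) : ∑ k, C / |x - η k| ^ 2 ≤ m * C / d ^ 2 := by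
  calc ∑ k, C / |x - η k| ^ 2 ≤ ∑ _k : Fin m, C / d ^ 2 :=
        Finset.sum_le_sum fun k _ => by gcongr; exact hη k
    _ = m * C / d ^ 2 := by simp [mul_div_assoc]

/-- Maximum principle for `L = (-Δ)^{1/2} - W` outside large neighbourhoods of the
points `η_1, …, η_m`. -/
theorem max_principle_outside_balls (m : ℕ) (hm : 1 ≤ m) (C₀ : ℝ) (hC₀ : 0 < C₀) :
    ∃ R₁ > 0, ∀ E : Set ℝ, IsOpen E → Bornology.IsBounded E →
      ∀ (η : Fin m → ℝ) (R : ℝ), R₁ ≤ R →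
      ∀ W : ℝ → ℝ, Measurable W →
        (∀ y ∈ E \ ⋃ j, Ioo (η j - R) (η j + R),
          0 ≤ W y ∧ W y ≤ ∑ j : Fin m, C₀ / |y - η j| ^ 2) →
      ∀ ψ : ℝ → ℝ, (∃ M : ℝ, ∀ x, |ψ x| ≤ M) → Continuous ψ →
        (∀ y ∈ (⋃ j, Ioo (η j - R) (η j + R)) ∪ Eᶜ, 0 ≤ ψ y) →
        (∀ y ∈ E \ ⋃ j, Ioo (η j - R) (η j + R),
          ∃ L : ℝ, HasHalfLapAt ψ y L ∧ 0 ≤ L - W y * ψ y) →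
        ∀ y : ℝ, 0 ≤ ψ y := by
  refine ⟨4 * π * m * C₀ + 1, by positivity, ?_⟩
  intro E _ hE η R hR W _ hW ψ ⟨M, hM⟩ hψ hψ_nonneg hψ_super
  by_contra! ⟨y₀, hy₀⟩
  obtain ⟨x₀, hx₀, hx₀_neg⟩ :=
    hψ.exists_forall_le_of_nonneg_compl hE (fun y hy => hψ_nonneg y (Or.inr hy)) hy₀
  have hx₀_mem : x₀ ∈ E \ ⋃ j, Ioo (η j - R) (η j + R) := by
    by_contra h
    exact hx₀_neg.not_ge (hψ_nonneg x₀ (by rw [Set.mem_sdiff] at h; tauto))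
  obtain ⟨L, hL, hL_super⟩ := hψ_super x₀ hx₀_mem
  have : Nonempty (Fin m) := Fin.pos_iff_nonempty.mp hm
  obtain ⟨j, hj⟩ := Finite.exists_min fun k => |x₀ - η k|
  have hR_le := le_abs_sub_of_notMem_iUnion_Ioo hx₀_mem.2
  have hR_pos : 0 < R := (by positivity : 0 < 4 * π * m * C₀ + 1).trans_le hR
  set d := |x₀ - η j|
  have hd : 0 < d := hR_pos.trans_le (hR_le j)
  have hL_lower : m * C₀ / d ^ 2 * ψ x₀ ≤ L := by
    have hW_le := (hW x₀ hx₀_mem).2.trans (sum_div_sq_abs_sub_le hC₀.le hd hj)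
    linarith [mul_le_mul_of_nonpos_right hW_le hx₀_neg.le]
  have hL_upper : L ≤ R * ψ x₀ / (4 * π * d ^ 2) :=
    hL.le_of_nonneg_on_Ioo hψ.measurable hM hx₀ hx₀_neg.le hR_pos (hR_le j)
      fun y hy => hψ_nonneg y (Or.inl (mem_iUnion.2 ⟨j, hy⟩))
  have hR_small : R / (4 * π) / d ^ 2 ≤ m * C₀ / d ^ 2 := by
    refine (mul_le_mul_right_of_neg hx₀_neg).mp ?_
    calc m * C₀ / d ^ 2 * ψ x₀ ≤ R * ψ x₀ / (4 * π * d ^ 2) := hL_lower.trans hL_upper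
      _ = R / (4 * π) / d ^ 2 * ψ x₀ := by ring
  rw [div_le_div_iff_of_pos_right (by positivity), div_le_iff₀ (by positivity)] at hR_small
  linarith
end

section
/- Let b ≥ 1 and J_b := (−2b−1, −2b) ∪ (0,1). For every v ∈ H^{1/2}(ℝ) with v = 0 a.e. on ℝ∖J_b and v ≥ 0 on J_b, one has −(1/(π b²))·‖v‖_{L¹((0,1))}·‖v‖_{L¹((−2b−1,−2b))} ≤ ℰ(v) ≤ (1/(2π))·[v]²_{H^{1/2}(ℝ)}, where ℰ(v) := ∫_ℝ∫_ℝ (v(x)−v(y))²·K(x,y) dx dy. -/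
open MeasureTheory Filter Set

/-- Squared Gagliardo `H^{1/2}` seminorm, `[v]² = ∫∫ (v(x)-v(y))²/(x-y)² dx dy`,
as a lower integral (so that finiteness expresses membership of the homogeneous space). -/
noncomputable def gagliardoSq (v : ℝ → ℝ) : ENNReal :=
  ∫⁻ x : ℝ, ∫⁻ y : ℝ, ENNReal.ofReal ((v x - v y) ^ 2 / (x - y) ^ 2)

/-- `v ∈ H^{1/2}(ℝ)`: `v ∈ L²(ℝ)` and the Gagliardo seminorm is finite. -/
def MemH12 (v : ℝ → ℝ) : Prop :=
  MeasureTheory.MemLp v 2 MeasureTheory.volume ∧ gagliardoSq v < ⊤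

/-- The fractional deformation kernel associated to `Υ(t) = max{t,0}`:
`K(x,y) = 0` if `xy > 0` and `K(x,y) = (1/2π)(1 - 2 max{x,y}/|x-y|)/(x-y)²` if `xy < 0`. -/
noncomputable def Kker (x y : ℝ) : ℝ :=
  if x * y < 0 then 1 / (2 * Real.pi) * (1 - 2 * max x y / |x - y|) / (x - y) ^ 2 else 0

/-!
`K` is symmetric and, for every `x ≠ 0`, `∫ K(x,y) dy = 0`: for `x < 0` the function
`y / (2π(y - x)²)` is a primitive of `K(x, ·)` on `(0, ∞)` vanishing at both ends, and `x > 0`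
follows from `K(-x,-y) = -K(x,y)`. Expanding `(v x - v y)²` therefore kills the two square terms
and leaves `ℰ(v) = -2 ∬ v(x) v(y) K(x,y)`. Since `K` vanishes on pairs of the same sign, only
`x ∈ (-2b-1,-2b)`, `y ∈ (0,1)` (and the symmetric pairs) contribute, and there `|x - y| ≥ 2b`
gives `|K| ≤ 1/(8πb²)`; this is the lower bound. The upper bound is the pointwise estimate
`|K(x,y)| ≤ 1/(2π(x-y)²)`, which also makes the energy integrand integrable.
-/

open Topology

lemma Kker_comm (x y : ℝ) : Kker x y = Kker y x := by
  unfold Kker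
  rw [mul_comm, max_comm, abs_sub_comm]
  ring_nf

lemma Kker_eq_zero_of_nonneg_mul {x y : ℝ} (h : 0 ≤ x * y) : Kker x y = 0 := if_neg h.not_gt

lemma Kker_of_neg_of_pos {x y : ℝ} (hx : x < 0) (hy : 0 < y) :
    Kker x y = 1 / (2 * Real.pi) * (-x - y) / (y - x) ^ 3 := by
  have hxy : 0 < y - x := by linarith
  rw [Kker, if_pos (mul_neg_of_neg_of_pos hx hy), max_eq_right (by linarith),
    abs_sub_comm, abs_of_pos hxy, show (x - y) ^ 2 = (y - x) ^ 2 by ring]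
  field_simp
  ring

lemma Kker_neg_neg (x y : ℝ) : Kker (-x) (-y) = -Kker x y := by
  rcases lt_or_ge (x * y) 0 with h | h
  · rcases mul_neg_iff.mp h with ⟨hx, hy⟩ | ⟨hx, hy⟩
    · rw [Kker_comm x, Kker_of_neg_of_pos hy hx,
        Kker_of_neg_of_pos (neg_neg_of_pos hx) (neg_pos.mpr hy)]
      ring
    · rw [Kker_comm (-x), Kker_of_neg_of_pos hx hy,
        Kker_of_neg_of_pos (neg_neg_of_pos hy) (neg_pos.mpr hx)]
      ring
  · rw [Kker_eq_zero_of_nonneg_mul h, Kker_eq_zero_of_nonneg_mul (by rwa [neg_mul_neg]),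
      neg_zero]

lemma abs_Kker_le (x y : ℝ) : |Kker x y| ≤ 1 / (2 * Real.pi) / (x - y) ^ 2 := by
  wlog hxy : x ≤ y generalizing x y
  · rw [Kker_comm, show (x - y) ^ 2 = (y - x) ^ 2 by ring]
    exact this y x (le_of_not_ge hxy)
  rcases lt_or_ge (x * y) 0 with h | h
  · have hx : x < 0 := by nlinarith
    have hy : 0 < y := by nlinarith
    have hyx : 0 < y - x := by linarith
    rw [Kker_of_neg_of_pos hx hy, abs_div, abs_mul,
      abs_of_pos (by positivity : 0 < 1 / (2 * Real.pi)), abs_of_pos (pow_pos hyx 3)]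
    calc 1 / (2 * Real.pi) * |-x - y| / (y - x) ^ 3
        ≤ 1 / (2 * Real.pi) * (y - x) / (y - x) ^ 3 := by
          gcongr
          exact abs_le.mpr ⟨by linarith, by linarith⟩
      _ = 1 / (2 * Real.pi) / (x - y) ^ 2 := by
          rw [show (x - y) ^ 2 = (y - x) ^ 2 by ring]
          field_simp
  · rw [Kker_eq_zero_of_nonneg_mul h, abs_zero]
    positivity

lemma abs_Kker_le_of_le_abs_sub {x y d : ℝ} (hd : 0 < d) (h : d ≤ |x - y|) :
    |Kker x y| ≤ 1 / (2 * Real.pi) / d ^ 2 :=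
  (abs_Kker_le x y).trans <| by rw [← sq_abs (x - y)]; gcongr

lemma measurable_Kker : Measurable (fun p : ℝ × ℝ => Kker p.1 p.2) :=
  Measurable.ite (measurableSet_lt (by fun_prop) measurable_const) (by fun_prop) measurable_const

lemma integral_Kker_of_neg {x : ℝ} (hx : x < 0) : ∫ y, Kker x y = 0 := by
  rw [← setIntegral_eq_integral_of_forall_compl_eq_zero (s := Ioi 0) fun y hy =>
    Kker_eq_zero_of_nonneg_mul (mul_nonneg_of_nonpos_of_nonpos hx.le (not_lt.mp hy)),
    setIntegral_congr_fun measurableSet_Ioi fun y hy => Kker_of_neg_of_pos hx hy]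
  set c := 1 / (2 * Real.pi)
  have hne : ∀ y ∈ Ici (0 : ℝ), y - x ≠ 0 := fun y hy => by linarith [mem_Ici.mp hy]
  have hinv : Tendsto (fun y : ℝ => (y - x)⁻¹) atTop (𝓝 0) :=
    tendsto_inv_atTop_zero.comp (tendsto_atTop_add_const_right _ (-x) tendsto_id)
  -- `c * y / (y - x) ^ 2`, written so that its limit at `∞` is visible
  have hprim : ∀ y ∈ Ici (0 : ℝ), HasDerivAt (fun y => c * ((y - x)⁻¹ + x * ((y - x)⁻¹) ^ 2))
      (c * (-x - y) / (y - x) ^ 3) y := by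
    intro y hy
    have hd := ((hasDerivAt_id' y).sub_const x).fun_inv (hne y hy)
    refine ((hd.add ((hd.fun_pow 2).const_mul x)).const_mul c).congr_deriv ?_
    simp only [Nat.cast_ofNat, Nat.add_one_sub_one, pow_one]
    field_simp [hne y hy]
    ring
  have hdom : IntegrableOn (fun y => c / (y - x) ^ 2) (Ioi 0) := by
    refine integrableOn_Ioi_deriv_of_nonneg' (fun y hy => ?_) (fun y _ => by positivity)
      (hinv.const_mul (-c))
    refine ((((hasDerivAt_id' y).sub_const x).fun_inv (hne y hy)).const_mul (-c)).congr_deriv ?_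
    ring
  have hint : IntegrableOn (fun y => c * (-x - y) / (y - x) ^ 3) (Ioi 0) := by
    refine hdom.mono' (Measurable.aestronglyMeasurable (by fun_prop))
      (ae_restrict_of_forall_mem measurableSet_Ioi fun y hy => ?_)
    rw [Real.norm_eq_abs, ← Kker_of_neg_of_pos hx hy, show (y - x) ^ 2 = (x - y) ^ 2 by ring]
    exact abs_Kker_le x y
  have hlim := (hinv.add ((hinv.pow 2).const_mul x)).const_mul c
  rw [integral_Ioi_of_hasDerivAt_of_tendsto' hprim hint hlim]
  field_simp
  ring

lemma integral_Kker_eq_zero {x : ℝ} (hx : x ≠ 0) : ∫ y, Kker x y = 0 := by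
  rcases hx.lt_or_gt with hx | hx
  · exact integral_Kker_of_neg hx
  · rw [← integral_neg_eq_self]
    simp_rw [show ∀ y, Kker x (-y) = -Kker (-x) y from fun y => by rw [← Kker_neg_neg, neg_neg]]
    rw [integral_neg, integral_Kker_of_neg (neg_neg_of_pos hx), neg_zero]

lemma ae_integral_Kker_eq_zero : ∀ᵐ x, ∫ y, Kker x y = 0 :=
  (volume.ae_ne 0).mono fun _ => integral_Kker_eq_zero

section SymmetricKernel

variable {α : Type*} [MeasurableSpace α] {μ : Measure α} [SFinite μ] {k : α → α → ℝ} {w : α → ℝ}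

theorem integral_sq_sub_mul_eq_neg_two_mul (hk : ∀ x y, k x y = k y x)
    (hrow : ∀ᵐ x ∂μ, ∫ y, k x y ∂μ = 0)
    (hsq : Integrable (fun p : α × α => w p.1 ^ 2 * k p.1 p.2) (μ.prod μ))
    (hmul : Integrable (fun p : α × α => w p.1 * w p.2 * k p.1 p.2) (μ.prod μ)) :
    ∫ p, (w p.1 - w p.2) ^ 2 * k p.1 p.2 ∂μ.prod μ =
      -2 * ∫ p, w p.1 * w p.2 * k p.1 p.2 ∂μ.prod μ := by
  set G : α × α → ℝ := fun p => w p.1 ^ 2 * k p.1 p.2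
  have hG : ∫ p, G p ∂μ.prod μ = 0 := by
    rw [integral_prod G hsq]
    refine integral_eq_zero_of_ae (hrow.mono fun x hx => ?_)
    simp only [G, integral_const_mul, hx, mul_zero, Pi.zero_apply]
  have hG' : ∫ p, G p.swap ∂μ.prod μ = 0 := by rw [integral_prod_swap, hG]
  have hsq' : Integrable (fun p => G p.swap) (μ.prod μ) := hsq.swap
  calc ∫ p, (w p.1 - w p.2) ^ 2 * k p.1 p.2 ∂μ.prod μ
      = ∫ p, (G p + G p.swap - 2 * (w p.1 * w p.2 * k p.1 p.2)) ∂μ.prod μ := by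
        congr 1 with p
        simp only [G, Prod.fst_swap, Prod.snd_swap, hk p.2]
        ring
    _ = -2 * ∫ p, w p.1 * w p.2 * k p.1 p.2 ∂μ.prod μ := by
        rw [integral_sub (hsq.fun_add hsq') (hmul.const_mul 2), integral_add hsq hsq', hG, hG',
          integral_const_mul]
        ring

end SymmetricKernel

lemma integral_integral_congr_ae {α β : Type*} [MeasurableSpace α] {μ : Measure α}
    {v w : α → β} (h : v =ᵐ[μ] w) (f : α → α → β → β → ℝ) :
    ∫ x, ∫ y, f x y (v x) (v y) ∂μ ∂μ = ∫ x, ∫ y, f x y (w x) (w y) ∂μ ∂μ := by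
  refine integral_congr_ae ?_
  filter_upwards [h] with x hx
  rw [hx]
  exact integral_congr_ae (h.mono fun y hy => by simp only [hy])

lemma gagliardoSq_congr_ae {v w : ℝ → ℝ} (h : v =ᵐ[volume] w) :
    gagliardoSq v = gagliardoSq w := by
  refine lintegral_congr_ae ?_
  filter_upwards [h] with x hx
  rw [hx]
  exact lintegral_congr_ae (h.mono fun y hy => by simp only [hy])

lemma MeasureTheory.MemLp.integrableOn_of_measure_ne_top {α E : Type*} [MeasurableSpace α]
    {μ : Measure α} [NormedAddCommGroup E] {f : α → E} {p : ENNReal} {s : Set α}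
    (hf : MemLp f p μ) (hp : 1 ≤ p) (hs : μ s ≠ ⊤) : IntegrableOn f s μ :=
  haveI := isFiniteMeasure_restrict.mpr hs
  (hf.restrict s).integrable hp

lemma exists_measurable_ae_eq_of_ae_eq_zero_off {α : Type*} [MeasurableSpace α]
    {μ : Measure α} {v : α → ℝ} {s : Set α} (hs : MeasurableSet s)
    (hv : AEStronglyMeasurable v μ) (hv0 : ∀ᵐ x ∂μ, x ∉ s → v x = 0) :
    ∃ w : α → ℝ, Measurable w ∧ v =ᵐ[μ] w ∧ ∀ x ∉ s, w x = 0 := by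
  refine ⟨s.indicator (hv.mk v), hv.stronglyMeasurable_mk.measurable.indicator hs, ?_,
    fun x hx => indicator_of_notMem hx _⟩
  filter_upwards [hv.ae_eq_mk, hv0] with x hmk hout
  by_cases hx : x ∈ s
  · simp [hx, hmk]
  · simp [hx, hout hx]

section Energy

variable {w : ℝ → ℝ}

lemma integrable_gagliardo_integrand (hwm : Measurable w) (hw : gagliardoSq w < ⊤) :
    Integrable (fun p : ℝ × ℝ => (w p.1 - w p.2) ^ 2 / (p.1 - p.2) ^ 2) (volume.prod volume) := by
  have hm : Measurable (fun p : ℝ × ℝ => (w p.1 - w p.2) ^ 2 / (p.1 - p.2) ^ 2) := by fun_prop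
  refine ⟨hm.aestronglyMeasurable, ?_⟩
  rw [hasFiniteIntegral_iff_ofReal (ae_of_all _ fun p => by positivity),
    lintegral_prod _ hm.ennreal_ofReal.aemeasurable]
  exact hw

lemma abs_energy_integrand_le (x y : ℝ) :
    |(w x - w y) ^ 2 * Kker x y| ≤ 1 / (2 * Real.pi) * ((w x - w y) ^ 2 / (x - y) ^ 2) := by
  rw [abs_mul, abs_of_nonneg (sq_nonneg _)]
  calc (w x - w y) ^ 2 * |Kker x y| ≤ (w x - w y) ^ 2 * (1 / (2 * Real.pi) / (x - y) ^ 2) :=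
        mul_le_mul_of_nonneg_left (abs_Kker_le x y) (sq_nonneg _)
    _ = 1 / (2 * Real.pi) * ((w x - w y) ^ 2 / (x - y) ^ 2) := by ring

lemma integrable_energy_integrand (hwm : Measurable w)
    (hG : Integrable (fun p : ℝ × ℝ => (w p.1 - w p.2) ^ 2 / (p.1 - p.2) ^ 2)
      (volume.prod volume)) :
    Integrable (fun p : ℝ × ℝ => (w p.1 - w p.2) ^ 2 * Kker p.1 p.2) (volume.prod volume) :=
  (hG.const_mul _).mono' (((hwm.comp measurable_fst).sub (hwm.comp measurable_snd)).pow_const 2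
    |>.mul measurable_Kker).aestronglyMeasurable
    (ae_of_all _ fun p => abs_energy_integrand_le p.1 p.2)

lemma integral_energy_integrand_le (hwm : Measurable w)
    (hG : Integrable (fun p : ℝ × ℝ => (w p.1 - w p.2) ^ 2 / (p.1 - p.2) ^ 2)
      (volume.prod volume)) :
    ∫ p, (w p.1 - w p.2) ^ 2 * Kker p.1 p.2 ∂volume.prod volume ≤
      1 / (2 * Real.pi) * ∫ p, (w p.1 - w p.2) ^ 2 / (p.1 - p.2) ^ 2 ∂volume.prod volume := by
  rw [← integral_const_mul]
  exact integral_mono (integrable_energy_integrand hwm hG) (hG.const_mul _)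
    fun p => (le_abs_self _).trans (abs_energy_integrand_le p.1 p.2)

variable {A B : Set ℝ} {M : ℝ}

lemma abs_Kker_le_of_mem_union (hA : A ⊆ Iio 0) (hB : B ⊆ Ioi 0) (hM0 : 0 ≤ M)
    (hM : ∀ x ∈ A, ∀ y ∈ B, |Kker x y| ≤ M) {x y : ℝ} (hx : x ∈ A ∪ B) (hy : y ∈ A ∪ B) :
    |Kker x y| ≤ M := by
  have hsame : ∀ {x y : ℝ}, 0 ≤ x * y → |Kker x y| ≤ M := fun h => by
    rwa [Kker_eq_zero_of_nonneg_mul h, abs_zero]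
  rcases hx with hx | hx <;> rcases hy with hy | hy
  · exact hsame (mul_nonneg_of_nonpos_of_nonpos (le_of_lt (hA hx)) (le_of_lt (hA hy)))
  · exact hM x hx y hy
  · exact Kker_comm x y ▸ hM y hy x hx
  · exact hsame (mul_nonneg (le_of_lt (hB hx)) (le_of_lt (hB hy)))

lemma abs_sq_mul_Kker_le (hA : A ⊆ Iio 0) (hB : B ⊆ Ioi 0) (hM0 : 0 ≤ M)
    (hM : ∀ x ∈ A, ∀ y ∈ B, |Kker x y| ≤ M) (hw : ∀ x ∉ A ∪ B, w x = 0) (x y : ℝ) :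
    |w x ^ 2 * Kker x y| ≤
      |(w x - w y) ^ 2 * Kker x y| + M * (w x ^ 2 * (A ∪ B).indicator 1 y) := by
  by_cases hy : y ∈ A ∪ B
  · by_cases hx : x ∈ A ∪ B
    · rw [abs_mul, abs_of_nonneg (sq_nonneg _), indicator_of_mem hy, Pi.one_apply, mul_one]
      nlinarith [abs_nonneg ((w x - w y) ^ 2 * Kker x y),
        abs_Kker_le_of_mem_union hA hB hM0 hM hx hy, sq_nonneg (w x)]
    · simp only [hw x hx, zero_pow two_ne_zero, zero_mul, abs_zero, mul_zero, add_zero]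
      exact abs_nonneg _
  · simp [hw y hy, indicator_of_notMem hy]

lemma abs_mul_mul_Kker_le (hA : A ⊆ Iio 0) (hB : B ⊆ Ioi 0) (hM0 : 0 ≤ M)
    (hM : ∀ x ∈ A, ∀ y ∈ B, |Kker x y| ≤ M) (hw : ∀ x ∉ A ∪ B, w x = 0) (x y : ℝ) :
    |w x * w y * Kker x y| ≤ M * (A.indicator (|w ·|) x * B.indicator (|w ·|) y +
      B.indicator (|w ·|) x * A.indicator (|w ·|) y) := by
  have hφ : ∀ (s : Set ℝ) z, 0 ≤ s.indicator (|w ·|) z := fun s z =>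
    indicator_nonneg (fun _ _ => abs_nonneg _) z
  have hrhs := mul_nonneg hM0
    (add_nonneg (mul_nonneg (hφ A x) (hφ B y)) (mul_nonneg (hφ B x) (hφ A y)))
  have hsame : 0 ≤ x * y → |w x * w y * Kker x y| = 0 := fun h => by
    rw [Kker_eq_zero_of_nonneg_mul h, mul_zero, abs_zero]
  have hcross : ∀ {x y}, x ∈ A → y ∈ B →
      |w x * w y * Kker x y| ≤ M * (A.indicator (|w ·|) x * B.indicator (|w ·|) y) :=
    fun hx hy => by
      rw [indicator_of_mem hx, indicator_of_mem hy, abs_mul, abs_mul, mul_comm M]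
      exact mul_le_mul_of_nonneg_left (hM _ hx _ hy) (by positivity)
  by_cases hx : x ∈ A ∪ B
  · by_cases hy : y ∈ A ∪ B
    · rcases hx with hx | hx <;> rcases hy with hy | hy
      · exact (hsame (mul_nonneg_of_nonpos_of_nonpos (le_of_lt (hA hx))
          (le_of_lt (hA hy)))).trans_le hrhs
      · linarith [hcross hx hy, mul_nonneg hM0 (mul_nonneg (hφ B x) (hφ A y))]
      · have h := hcross hy hx
        rw [Kker_comm y x, mul_comm (w y)] at h
        linarith [mul_nonneg hM0 (mul_nonneg (hφ A x) (hφ B y))]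
      · exact (hsame (mul_nonneg (le_of_lt (hB hx)) (le_of_lt (hB hy)))).trans_le hrhs
    · simpa [hw y hy] using hrhs
  · simpa [hw x hx] using hrhs

theorem neg_four_mul_le_integral_energy_integrand (hA : A ⊆ Iio 0) (hB : B ⊆ Ioi 0)
    (hAm : MeasurableSet A) (hBm : MeasurableSet B) (hAfin : volume A ≠ ⊤)
    (hBfin : volume B ≠ ⊤) (hM0 : 0 ≤ M) (hM : ∀ x ∈ A, ∀ y ∈ B, |Kker x y| ≤ M)
    (hwm : Measurable w) (hwL2 : MemLp w 2) (hw : ∀ x ∉ A ∪ B, w x = 0)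
    (hF : Integrable (fun p : ℝ × ℝ => (w p.1 - w p.2) ^ 2 * Kker p.1 p.2) (volume.prod volume)) :
    -(4 * M) * ((∫ x in A, |w x|) * ∫ x in B, |w x|) ≤
      ∫ p, (w p.1 - w p.2) ^ 2 * Kker p.1 p.2 ∂volume.prod volume := by
  have hm₁ : Measurable (fun p : ℝ × ℝ => w p.1) := hwm.comp measurable_fst
  have hm₂ : Measurable (fun p : ℝ × ℝ => w p.2) := hwm.comp measurable_snd
  have hφA : Integrable (A.indicator (|w ·|)) :=
    (integrable_indicator_iff hAm).mpr (hwL2.integrableOn_of_measure_ne_top one_le_two hAfin).abs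
  have hφB : Integrable (B.indicator (|w ·|)) :=
    (integrable_indicator_iff hBm).mpr (hwL2.integrableOn_of_measure_ne_top one_le_two hBfin).abs
  have hdom : Integrable (fun p : ℝ × ℝ => M * (A.indicator (|w ·|) p.1 *
      B.indicator (|w ·|) p.2 + B.indicator (|w ·|) p.1 * A.indicator (|w ·|) p.2))
      (volume.prod volume) :=
    ((hφA.mul_prod hφB).add (hφB.mul_prod hφA)).const_mul M
  have hmul : Integrable (fun p : ℝ × ℝ => w p.1 * w p.2 * Kker p.1 p.2) (volume.prod volume) :=
    hdom.mono' ((hm₁.mul hm₂).mul measurable_Kker).aestronglyMeasurable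
      (ae_of_all _ fun p => abs_mul_mul_Kker_le hA hB hM0 hM hw p.1 p.2)
  have hJ : Integrable ((A ∪ B).indicator (1 : ℝ → ℝ)) :=
    (integrable_indicator_iff (hAm.union hBm)).mpr <| integrableOn_const <|
      (measure_union_le A B).trans_lt (ENNReal.add_lt_top.mpr ⟨hAfin.lt_top, hBfin.lt_top⟩) |>.ne
  have hsq : Integrable (fun p : ℝ × ℝ => w p.1 ^ 2 * Kker p.1 p.2) (volume.prod volume) :=
    (hF.abs.add ((hwL2.integrable_sq.mul_prod hJ).const_mul M)).mono'
      ((hm₁.pow_const 2).mul measurable_Kker).aestronglyMeasurable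
      (ae_of_all _ fun p => abs_sq_mul_Kker_le hA hB hM0 hM hw p.1 p.2)
  have hcross : ∫ p, w p.1 * w p.2 * Kker p.1 p.2 ∂volume.prod volume ≤
      2 * M * ((∫ x in A, |w x|) * ∫ x in B, |w x|) := by
    refine (integral_mono hmul hdom fun p =>
      (le_abs_self _).trans (abs_mul_mul_Kker_le hA hB hM0 hM hw p.1 p.2)).trans_eq ?_
    rw [integral_const_mul, integral_add (hφA.mul_prod hφB) (hφB.mul_prod hφA),
      integral_prod_mul, integral_prod_mul, integral_indicator hAm, integral_indicator hBm]
    ring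
  rw [integral_sq_sub_mul_eq_neg_two_mul Kker_comm ae_integral_Kker_eq_zero hsq hmul]
  linarith

end Energy

theorem deformation_energy_bounds_general (b : ℝ) (hb : 1 ≤ b) (v : ℝ → ℝ)
    (hv : MemH12 v)
    (hv0 : ∀ᵐ x ∂MeasureTheory.volume,
      x ∉ Ioo (-2 * b - 1) (-2 * b) ∪ Ioo (0:ℝ) 1 → v x = 0) :
    (-(1 / (Real.pi * b ^ 2)) * (∫ x in Ioo (0:ℝ) 1, |v x|) *
        (∫ x in Ioo (-2 * b - 1) (-2 * b), |v x|)
      ≤ ∫ x : ℝ, ∫ y : ℝ, (v x - v y) ^ 2 * Kker x y) ∧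
    ((∫ x : ℝ, ∫ y : ℝ, (v x - v y) ^ 2 * Kker x y)
      ≤ 1 / (2 * Real.pi) * ∫ x : ℝ, ∫ y : ℝ, (v x - v y) ^ 2 / (x - y) ^ 2) := by
  obtain ⟨hL2, hgag⟩ := hv
  set A := Ioo (-2 * b - 1) (-2 * b)
  set B := Ioo (0 : ℝ) 1
  obtain ⟨w, hwm, hvw, hw⟩ :=
    exists_measurable_ae_eq_of_ae_eq_zero_off (measurableSet_Ioo.union measurableSet_Ioo) hL2.1 hv0
  have hG := integrable_gagliardo_integrand hwm (gagliardoSq_congr_ae hvw ▸ hgag)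
  have hF := integrable_energy_integrand hwm hG
  have hM (x) (hx : x ∈ A) (y) (hy : y ∈ B) : |Kker x y| ≤ 1 / (2 * Real.pi) / (2 * b) ^ 2 :=
    abs_Kker_le_of_le_abs_sub (by positivity) <| by
      rw [abs_sub_comm, abs_of_pos] <;> linarith [hx.2, hy.1]
  have hlower := neg_four_mul_le_integral_energy_integrand
    (fun x hx => show x < 0 by linarith [hx.2]) (fun x hx => hx.1) measurableSet_Ioo
    measurableSet_Ioo measure_Ioo_lt_top.ne measure_Ioo_lt_top.ne (by positivity) hM hwm
    (hL2.ae_eq hvw) hw hF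
  have hF' := integral_integral_congr_ae hvw fun x y a b => (a - b) ^ 2 * Kker x y
  have hG' := integral_integral_congr_ae hvw fun x y a b => (a - b) ^ 2 / (x - y) ^ 2
  beta_reduce at hF' hG'
  have habs (s : Set ℝ) : ∫ x in s, |v x| = ∫ x in s, |w x| :=
    integral_congr_ae (ae_restrict_of_ae (hvw.fun_comp abs))
  rw [hF', hG', integral_integral hF, integral_integral hG, habs, habs]
  refine ⟨le_trans ?_ hlower, integral_energy_integrand_le hwm hG⟩
  have hcoef : 4 * (1 / (2 * Real.pi) / (2 * b) ^ 2) ≤ 1 / (Real.pi * b ^ 2) := by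
    rw [show 4 * (1 / (2 * Real.pi) / (2 * b) ^ 2) = 1 / (Real.pi * b ^ 2) / 2 by field_simp; ring]
    linarith [show 0 < 1 / (Real.pi * b ^ 2) by positivity]
  have hI : 0 ≤ (∫ x in A, |w x|) * ∫ x in B, |w x| :=
    mul_nonneg (setIntegral_nonneg measurableSet_Ioo fun x _ => abs_nonneg (w x))
      (setIntegral_nonneg measurableSet_Ioo fun x _ => abs_nonneg (w x))
  nlinarith [mul_le_mul_of_nonneg_right hcoef hI]

/-- Two-sided bound for the deformation energy `ℰ(v) = ∫∫ (v(x)-v(y))² K(x,y) dx dy`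
of nonnegative functions supported in `J_b = (-2b-1,-2b) ∪ (0,1)`. -/
theorem deformation_energy_bounds (b : ℝ) (hb : 1 ≤ b) (v : ℝ → ℝ)
    (hv : MemH12 v)
    (hv0 : ∀ᵐ x ∂MeasureTheory.volume,
      x ∉ Ioo (-2 * b - 1) (-2 * b) ∪ Ioo (0:ℝ) 1 → v x = 0)
    (hvpos : ∀ x ∈ Ioo (-2 * b - 1) (-2 * b) ∪ Ioo (0:ℝ) 1, 0 ≤ v x) :
    (-(1 / (Real.pi * b ^ 2)) * (∫ x in Ioo (0:ℝ) 1, |v x|) *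
        (∫ x in Ioo (-2 * b - 1) (-2 * b), |v x|)
      ≤ ∫ x : ℝ, ∫ y : ℝ, (v x - v y) ^ 2 * Kker x y) ∧
    ((∫ x : ℝ, ∫ y : ℝ, (v x - v y) ^ 2 * Kker x y)
      ≤ 1 / (2 * Real.pi) * ∫ x : ℝ, ∫ y : ℝ, (v x - v y) ^ 2 / (x - y) ^ 2) :=
  deformation_energy_bounds_general b hb v hv hv0
end

section
/- For every x₀ ∈ ℝ, r > 0, and t > 0, there exist v ∈ H^{1/2}(ℝ) and an open set U ⊂ ℝ with [x₀−r, x₀+r] ⊂ U such that v = 1 a.e. on U and [v]²_{H^{1/2}(ℝ)} ≤ t; consequently the H^{1/2}-capacity CAP_{1/2}((x₀−r, x₀+r)) := inf{ [v]²_{H^{1/2}(ℝ)} : v ∈ H^{1/2}(ℝ), v = 1 a.e. on an open neighborhood of (x₀−r, x₀+r) } equals 0. Moreover, for every x₀ ∈ ℝ and t > 0 there exist v ∈ H^{1/2}(ℝ) and an open set U ∋ x₀ such that v = 1 a.e. on U and ‖v‖²_{L²(ℝ)} + [v]²_{H^{1/2}(ℝ)} ≤ t; consequently the capacity of the singleton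 {x₀} measured with the full H^{1/2}-norm also equals 0. -/
/-!
The test functions are logarithmic cutoffs `v = clamp (1 - log (|x| / a) / N)`, equal to `1` on
`[-a, a]` and to `0` off `(-a eᴺ, a eᴺ)`. For `|x| ≤ |y|` they vary by at most
`log (|y| / |x|) / N`, and the elementary bound `log s ≤ 4 (s - 1) s^(-3/4)` for `s ≥ 1` bounds the
Gagliardo kernel by `16 N⁻² |x|^(-1/2) |y|^(-3/2)` on `{a < |y|, |x| < a eᴺ, |x| ≤ |y|}`.
The region `|x| ≤ a` contributes `O(1)` to the integral of this majorant and the annulus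
`a < |x| < a eᴺ` contributes `O(log eᴺ) = O(N)`, so `[v]² = O(1 / N)`. Taking `N` large makes the
seminorm small; shrinking `a` afterwards makes `‖v‖²_{L²} ≤ 2 a eᴺ` small as well.
-/

open MeasureTheory Filter Set

open Real
open scoped ENNReal

theorem Real.sq_log_div_le {p q : ℝ} (hp : 0 < p) (hpq : p ≤ q) :
    log (q / p) ^ 2 ≤ 16 * (q - p) ^ 2 * (p ^ (-(1 / 2 : ℝ)) * q ^ (-(3 / 2 : ℝ))) := by
  have hq : 0 < q := hp.trans_le hpq
  set u := p ^ (1 / 4 : ℝ)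
  set w := q ^ (1 / 4 : ℝ)
  have hu : 0 < u := rpow_pos_of_pos hp _
  have hw : 0 < w := rpow_pos_of_pos hq _
  have huw : u ≤ w := rpow_le_rpow hp.le hpq (by norm_num)
  have hpow : ∀ {s : ℝ}, 0 < s → ∀ n : ℕ, (s ^ (1 / 4 : ℝ)) ^ n = s ^ ((n : ℝ) / 4) := by
    intro s hs n
    rw [← rpow_natCast, ← rpow_mul hs.le]
    ring_nf
  have hp4 : p = u ^ 4 := by rw [hpow hp]; norm_num
  have hq4 : q = w ^ 4 := by rw [hpow hq]; norm_num
  have hp' : p ^ (-(1 / 2 : ℝ)) = (u ^ 2)⁻¹ := by rw [rpow_neg hp.le, hpow hp]; norm_num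
  have hq' : q ^ (-(3 / 2 : ℝ)) = (w ^ 6)⁻¹ := by rw [rpow_neg hq.le, hpow hq]; norm_num
  have hlog : log (q / p) = 4 * log (w / u) := by
    rw [hp4, hq4, ← div_pow, log_pow]
    norm_num
  have hlog_le : log (w / u) ≤ (w - u) / u := by
    have := log_le_sub_one_of_pos (div_pos hw hu)
    rwa [div_sub_one hu.ne'] at this
  have hlog_nonneg : 0 ≤ log (w / u) := log_nonneg ((one_le_div hu).2 huw)
  -- `w⁴ - u⁴ = (w - u)(w³ + w²u + wu² + u³) ≥ (w - u) w³`
  have hfactor : (w - u) * w ^ 3 ≤ w ^ 4 - u ^ 4 := by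
    nlinarith [pow_le_pow_left₀ hu.le huw 3]
  rw [hp', hq', hlog, hp4, hq4]
  calc (4 * log (w / u)) ^ 2 ≤ (4 * ((w - u) / u)) ^ 2 := by gcongr
    _ = 16 * ((w - u) * w ^ 3) ^ 2 * ((u ^ 2)⁻¹ * (w ^ 6)⁻¹) := by field_simp; ring
    _ ≤ 16 * (w ^ 4 - u ^ 4) ^ 2 * ((u ^ 2)⁻¹ * (w ^ 6)⁻¹) := by
      gcongr

theorem lintegral_comp_abs (f : ℝ → ℝ≥0∞) : ∫⁻ x, f |x| = 2 * ∫⁻ x in Ioi 0, f x := by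
  have hpos : ∫⁻ x in Ioi 0, f |x| = ∫⁻ x in Ioi 0, f x :=
    setLIntegral_congr_fun measurableSet_Ioi fun x hx => by rw [abs_of_pos hx]
  have hneg : ∫⁻ x in Iio 0, f |x| = ∫⁻ x in Ioi 0, f |x| := by
    simpa using (Measure.measurePreserving_neg volume).setLIntegral_comp_preimage_emb
      (measurableEmbedding_neg) (fun x => f |x|) (Ioi 0)
  rw [← lintegral_add_compl _ measurableSet_Iio, compl_Iio, ← setLIntegral_congr Ioi_ae_eq_Ici,
    hneg, hpos, two_mul]

theorem lintegral_Ioi_rpow_of_lt {r c : ℝ} (hr : r < -1) (hc : 0 < c) :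
    ∫⁻ t in Ioi c, ENNReal.ofReal (t ^ r) = ENNReal.ofReal (-c ^ (r + 1) / (r + 1)) := by
  rw [← ofReal_integral_eq_lintegral_ofReal (integrableOn_Ioi_rpow_of_lt hr hc)
    ((ae_restrict_iff' measurableSet_Ioi).2
      (ae_of_all _ fun t ht => rpow_nonneg (hc.trans ht).le _)),
    integral_Ioi_rpow_of_lt hr hc]

theorem lintegral_Ioc_zero_rpow {r b : ℝ} (hr : -1 < r) (hb : 0 ≤ b) :
    ∫⁻ t in Ioc 0 b, ENNReal.ofReal (t ^ r) = ENNReal.ofReal (b ^ (r + 1) / (r + 1)) := by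
  rw [← ofReal_integral_eq_lintegral_ofReal
    ((intervalIntegrable_iff_integrableOn_Ioc_of_le hb).1
      (intervalIntegral.intervalIntegrable_rpow' hr))
    ((ae_restrict_iff' measurableSet_Ioc).2 (ae_of_all _ fun t ht => rpow_nonneg ht.1.le _)),
    ← intervalIntegral.integral_of_le hb, integral_rpow (Or.inl hr),
    zero_rpow (by linarith : r + 1 ≠ 0), sub_zero]

theorem lintegral_Ioc_inv {a b : ℝ} (ha : 0 < a) (hab : a ≤ b) :
    ∫⁻ t in Ioc a b, ENNReal.ofReal t⁻¹ = ENNReal.ofReal (log (b / a)) := by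
  rw [← ofReal_integral_eq_lintegral_ofReal
    ((intervalIntegrable_iff_integrableOn_Ioc_of_le hab).1 (intervalIntegrable_inv_iff.2
      (Or.inr fun h => by linarith [(uIcc_of_le hab ▸ h).1])))
    ((ae_restrict_iff' measurableSet_Ioc).2
      (ae_of_all _ fun t ht => inv_nonneg.2 (ha.trans ht.1).le)),
    ← intervalIntegral.integral_of_le hab, integral_inv_of_pos ha (ha.trans_le hab)]

theorem lintegral_lintegral_add_swap {α : Type*} [MeasurableSpace α] {μ : Measure α} [SFinite μ]
    {f : α → α → ℝ≥0∞} (hf : Measurable (Function.uncurry f)) :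
    ∫⁻ x, ∫⁻ y, (f x y + f y x) ∂μ ∂μ = 2 * ∫⁻ x, ∫⁻ y, f x y ∂μ ∂μ := by
  rw [lintegral_congr fun x => lintegral_add_left hf.of_uncurry_left _,
    lintegral_add_left (f := fun x => ∫⁻ y, f x y ∂μ) hf.lintegral_prod_right',
    lintegral_lintegral_swap (f := fun x y => f y x) (hf.comp measurable_swap).aemeasurable,
    two_mul]

noncomputable def kernelMajorant (a b x y : ℝ) : ℝ≥0∞ :=
  if a < |y| ∧ |x| < b ∧ |x| ≤ |y| then
    ENNReal.ofReal (|x| ^ (-(1 / 2 : ℝ)) * |y| ^ (-(3 / 2 : ℝ)))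
  else 0

theorem measurable_kernelMajorant (a b : ℝ) :
    Measurable (Function.uncurry (kernelMajorant a b)) := by
  refine Measurable.ite ?_ (by fun_prop) measurable_const
  exact (measurableSet_lt measurable_const measurable_snd.abs).inter
    ((measurableSet_lt measurable_fst.abs measurable_const).inter
      (measurableSet_le measurable_fst.abs measurable_snd.abs))

theorem lintegral_kernelMajorant_le {a : ℝ} (ha : 0 < a) (b x : ℝ) :
    ∫⁻ y, kernelMajorant a b x y ≤ (Iic b).indicator
      (fun p => ENNReal.ofReal (4 * (p ^ (-(1 / 2 : ℝ)) * max a p ^ (-(1 / 2 : ℝ))))) |x| := by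
  by_cases hxb : b < |x|
  · have hzero : ∀ y, kernelMajorant a b x y = 0 :=
      fun y => if_neg fun h => (h.2.1.trans hxb).false
    simp [hzero]
  have hc : 0 < max a |x| := lt_max_of_lt_left ha
  calc ∫⁻ y, kernelMajorant a b x y
      ≤ ∫⁻ y, ENNReal.ofReal (|x| ^ (-(1 / 2 : ℝ))) *
          (Ici (max a |x|)).indicator (fun q => ENNReal.ofReal (q ^ (-(3 / 2 : ℝ)))) |y| := by
        refine lintegral_mono fun y => ?_
        unfold kernelMajorant
        split_ifs with h
        · rw [indicator_of_mem (mem_Ici.2 (max_le h.1.le h.2.2)),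
            ENNReal.ofReal_mul (by positivity)]
        · exact zero_le
    _ = ENNReal.ofReal (|x| ^ (-(1 / 2 : ℝ))) *
          (2 * ENNReal.ofReal (2 * max a |x| ^ (-(1 / 2 : ℝ)))) := by
        rw [lintegral_const_mul' _ _ ENNReal.ofReal_ne_top, lintegral_comp_abs,
          setLIntegral_indicator measurableSet_Ici, inter_eq_left.2 (Ici_subset_Ioi.2 hc),
          ← setLIntegral_congr Ioi_ae_eq_Ici, lintegral_Ioi_rpow_of_lt (by norm_num) hc]
        congr 3
        norm_num
        ring
    _ = _ := by
        rw [indicator_of_mem (mem_Iic.2 (not_lt.1 hxb)), ← ENNReal.ofReal_ofNat 2,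
          ← ENNReal.ofReal_mul (by norm_num), ← ENNReal.ofReal_mul (by positivity)]
        ring_nf

theorem lintegral_lintegral_kernelMajorant_le {a b : ℝ} (ha : 0 < a) (hab : a ≤ b) :
    ∫⁻ x, ∫⁻ y, kernelMajorant a b x y ≤ ENNReal.ofReal (8 * (2 + log (b / a))) := by
  set g : ℝ → ℝ≥0∞ := fun p => ENNReal.ofReal (4 * (p ^ (-(1 / 2 : ℝ)) * max a p ^ (-(1 / 2 : ℝ))))
  have hball : ∫⁻ p in Ioc 0 a, g p = ENNReal.ofReal 8 := by
    calc ∫⁻ p in Ioc 0 a, g p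
        = ∫⁻ p in Ioc 0 a,
            ENNReal.ofReal (4 * a ^ (-(1 / 2 : ℝ))) * ENNReal.ofReal (p ^ (-(1 / 2 : ℝ))) :=
          setLIntegral_congr_fun measurableSet_Ioc fun p hp => by
            simp only [g]
            rw [← ENNReal.ofReal_mul (by positivity), max_eq_left hp.2]
            ring_nf
      _ = ENNReal.ofReal 8 := by
          rw [lintegral_const_mul' _ _ ENNReal.ofReal_ne_top,
            lintegral_Ioc_zero_rpow (by norm_num) ha.le,
            ← ENNReal.ofReal_mul (by positivity), mul_div_assoc', mul_assoc, ← rpow_add ha]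
          norm_num
  have hannulus : ∫⁻ p in Ioc a b, g p = ENNReal.ofReal (4 * log (b / a)) := by
    calc ∫⁻ p in Ioc a b, g p = ∫⁻ p in Ioc a b, ENNReal.ofReal 4 * ENNReal.ofReal p⁻¹ :=
          setLIntegral_congr_fun measurableSet_Ioc fun p hp => by
            simp only [g]
            rw [← ENNReal.ofReal_mul (by norm_num), max_eq_right hp.1.le,
              ← rpow_add (ha.trans hp.1)]
            norm_num [rpow_neg_one]
      _ = ENNReal.ofReal (4 * log (b / a)) := by
          rw [lintegral_const_mul' _ _ ENNReal.ofReal_ne_top, lintegral_Ioc_inv ha hab,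
            ← ENNReal.ofReal_mul (by norm_num)]
  calc ∫⁻ x, ∫⁻ y, kernelMajorant a b x y ≤ ∫⁻ x, (Iic b).indicator g |x| :=
        lintegral_mono (lintegral_kernelMajorant_le ha b)
    _ = 2 * ∫⁻ p in Ioc 0 a ∪ Ioc a b, g p := by
        rw [lintegral_comp_abs, setLIntegral_indicator measurableSet_Iic, Iic_inter_Ioi,
          Ioc_union_Ioc_eq_Ioc ha.le hab]
    _ ≤ 2 * ((∫⁻ p in Ioc 0 a, g p) + ∫⁻ p in Ioc a b, g p) :=
        mul_le_mul_right (lintegral_union_le _ _ _) 2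
    _ = ENNReal.ofReal (8 * (2 + log (b / a))) := by
        have hlog : 0 ≤ log (b / a) := log_nonneg ((one_le_div ha).2 hab)
        rw [hball, hannulus, ← ENNReal.ofReal_add (by norm_num) (by positivity),
          ← ENNReal.ofReal_ofNat 2, ← ENNReal.ofReal_mul (by norm_num)]
        ring_nf

noncomputable def logCutoff (a N x : ℝ) : ℝ := max (min (1 - log (|x| / a) / N) 1) 0

section logCutoff

variable {a N x y : ℝ}

theorem logCutoff_nonneg : 0 ≤ logCutoff a N x := le_max_right _ _

theorem logCutoff_le_one : logCutoff a N x ≤ 1 := max_le (min_le_right _ _) zero_le_one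

theorem logCutoff_eq_one (ha : 0 < a) (hN : 0 < N) (hx : |x| ≤ a) : logCutoff a N x = 1 := by
  have hlog : log (|x| / a) ≤ 0 := log_nonpos (by positivity) (div_le_one_of_le₀ hx ha.le)
  have : 1 ≤ 1 - log (|x| / a) / N := by
    linarith [div_nonpos_of_nonpos_of_nonneg hlog hN.le]
  simp [logCutoff, min_eq_right this]

theorem logCutoff_eq_zero (ha : 0 < a) (hN : 0 < N) (hx : a * exp N ≤ |x|) :
    logCutoff a N x = 0 := by
  have hx₀ : 0 < |x| := (by positivity : 0 < a * exp N).trans_le hx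
  have hlog : N ≤ log (|x| / a) := by
    rwa [le_log_iff_exp_le (div_pos hx₀ ha), le_div_iff₀ ha, mul_comm]
  have : 1 - log (|x| / a) / N ≤ 0 := by
    rw [sub_nonpos, le_div_iff₀ hN]
    linarith
  exact max_eq_right ((min_le_left _ _).trans this)

theorem logCutoff_eq_of_abs_le (ha : 0 < a) (hN : 0 < N) (hxy : |x| ≤ |y|)
    (h : ¬(a < |y| ∧ |x| < a * exp N)) : logCutoff a N x = logCutoff a N y := by
  rcases not_and_or.1 h with h | h
  · rw [not_lt] at h
    rw [logCutoff_eq_one ha hN (hxy.trans h), logCutoff_eq_one ha hN h]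
  · rw [not_lt] at h
    rw [logCutoff_eq_zero ha hN h, logCutoff_eq_zero ha hN (h.trans hxy)]

theorem abs_logCutoff_sub_le (ha : 0 < a) (hN : 0 < N) (hx : x ≠ 0) (hxy : |x| ≤ |y|) :
    |logCutoff a N x - logCutoff a N y| ≤ log (|y| / |x|) / N := by
  have hx₀ : 0 < |x| := abs_pos.2 hx
  have hy₀ : 0 < |y| := hx₀.trans_le hxy
  have hdiff : (1 - log (|x| / a) / N) - (1 - log (|y| / a) / N) = log (|y| / |x|) / N := by
    rw [log_div hx₀.ne' ha.ne', log_div hy₀.ne' ha.ne', log_div hy₀.ne' hx₀.ne']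
    ring
  calc |logCutoff a N x - logCutoff a N y|
      ≤ |(1 - log (|x| / a) / N) - (1 - log (|y| / a) / N)| :=
        (abs_max_sub_max_le_abs _ _ _).trans ((abs_min_sub_min_le_max _ _ _ _).trans (by simp))
    _ = log (|y| / |x|) / N := by
        rw [hdiff, abs_of_nonneg (div_nonneg (log_nonneg ((one_le_div hx₀).2 hxy)) hN.le)]

theorem sq_logCutoff_sub_le (ha : 0 < a) (hN : 0 < N) (hx : x ≠ 0) (hxy : |x| ≤ |y|) :
    (logCutoff a N x - logCutoff a N y) ^ 2 ≤
      16 / N ^ 2 * (x - y) ^ 2 * (|x| ^ (-(1 / 2 : ℝ)) * |y| ^ (-(3 / 2 : ℝ))) := by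
  have habs : (|y| - |x|) ^ 2 ≤ (x - y) ^ 2 :=
    sq_le_sq.2 (by simpa [abs_sub_comm] using abs_abs_sub_abs_le_abs_sub y x)
  calc (logCutoff a N x - logCutoff a N y) ^ 2
      = |logCutoff a N x - logCutoff a N y| ^ 2 := (sq_abs _).symm
    _ ≤ (log (|y| / |x|) / N) ^ 2 :=
        pow_le_pow_left₀ (abs_nonneg _) (abs_logCutoff_sub_le ha hN hx hxy) 2
    _ ≤ 16 * (|y| - |x|) ^ 2 * (|x| ^ (-(1 / 2 : ℝ)) * |y| ^ (-(3 / 2 : ℝ))) / N ^ 2 := by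
        rw [div_pow]
        gcongr
        exact sq_log_div_le (abs_pos.2 hx) hxy
    _ ≤ 16 * (x - y) ^ 2 * (|x| ^ (-(1 / 2 : ℝ)) * |y| ^ (-(3 / 2 : ℝ))) / N ^ 2 := by gcongr
    _ = 16 / N ^ 2 * (x - y) ^ 2 * (|x| ^ (-(1 / 2 : ℝ)) * |y| ^ (-(3 / 2 : ℝ))) := by ring

theorem ofReal_sq_logCutoff_le_indicator (ha : 0 < a) (hN : 0 < N) (x : ℝ) :
    ENNReal.ofReal (logCutoff a N x ^ 2) ≤ (Metric.closedBall 0 (a * exp N)).indicator 1 x := by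
  by_cases hx : x ∈ Metric.closedBall 0 (a * exp N)
  · rw [indicator_of_mem hx, Pi.one_apply, ← ENNReal.ofReal_one]
    exact ENNReal.ofReal_le_ofReal (pow_le_one₀ logCutoff_nonneg logCutoff_le_one)
  · rw [Metric.mem_closedBall, Real.dist_eq, sub_zero, not_le] at hx
    simp [logCutoff_eq_zero ha hN hx.le]

theorem lintegral_sq_logCutoff_le (ha : 0 < a) (hN : 0 < N) :
    ∫⁻ x, ENNReal.ofReal (logCutoff a N x ^ 2) ≤ ENNReal.ofReal (2 * (a * exp N)) := by
  calc ∫⁻ x, ENNReal.ofReal (logCutoff a N x ^ 2)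
      ≤ ∫⁻ x, (Metric.closedBall 0 (a * exp N)).indicator 1 x :=
        lintegral_mono (ofReal_sq_logCutoff_le_indicator ha hN)
    _ = ENNReal.ofReal (2 * (a * exp N)) := by
        rw [lintegral_indicator_one measurableSet_closedBall, Real.volume_closedBall]

theorem measurable_logCutoff (a N : ℝ) : Measurable (logCutoff a N) := by
  unfold logCutoff
  fun_prop

theorem memLp_logCutoff (ha : 0 < a) (hN : 0 < N) : MemLp (logCutoff a N) 2 volume := by
  refine MemLp.of_le (memLp_indicator_const 2 (measurableSet_closedBall (x := 0) (ε := a * exp N))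
      (1 : ℝ) (Or.inr measure_closedBall_lt_top.ne))
    (measurable_logCutoff a N).aestronglyMeasurable (ae_of_all _ fun x => ?_)
  by_cases hx : x ∈ Metric.closedBall 0 (a * exp N)
  · simpa [indicator_of_mem hx, abs_of_nonneg logCutoff_nonneg] using logCutoff_le_one
  · rw [Metric.mem_closedBall, Real.dist_eq, sub_zero, not_le] at hx
    simp [logCutoff_eq_zero ha hN hx.le]

theorem ofReal_kernel_logCutoff_le_of_abs_le (ha : 0 < a) (hN : 0 < N) (hx : x ≠ 0)
    (hxy : |x| ≤ |y|) :
    ENNReal.ofReal ((logCutoff a N x - logCutoff a N y) ^ 2 / (x - y) ^ 2) ≤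
      ENNReal.ofReal (16 / N ^ 2) * kernelMajorant a (a * exp N) x y := by
  by_cases hsupp : a < |y| ∧ |x| < a * exp N
  · rw [kernelMajorant, if_pos ⟨hsupp.1, hsupp.2, hxy⟩, ← ENNReal.ofReal_mul (by positivity)]
    refine ENNReal.ofReal_le_ofReal (div_le_of_le_mul₀ (sq_nonneg _) (by positivity) ?_)
    linarith [sq_logCutoff_sub_le ha hN hx hxy]
  · simp [logCutoff_eq_of_abs_le ha hN hxy hsupp]

theorem ofReal_kernel_logCutoff_le (ha : 0 < a) (hN : 0 < N) (hx : x ≠ 0) (hy : y ≠ 0) :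
    ENNReal.ofReal ((logCutoff a N x - logCutoff a N y) ^ 2 / (x - y) ^ 2) ≤
      ENNReal.ofReal (16 / N ^ 2) *
        (kernelMajorant a (a * exp N) x y + kernelMajorant a (a * exp N) y x) := by
  rcases le_total |x| |y| with hxy | hyx
  · exact (ofReal_kernel_logCutoff_le_of_abs_le ha hN hx hxy).trans (by gcongr; exact le_self_add)
  · rw [show (logCutoff a N x - logCutoff a N y) ^ 2 / (x - y) ^ 2 =
        (logCutoff a N y - logCutoff a N x) ^ 2 / (y - x) ^ 2 by ring]
    exact (ofReal_kernel_logCutoff_le_of_abs_le ha hN hy hyx).trans (by gcongr; exact le_add_self)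

theorem gagliardoSq_logCutoff_le (ha : 0 < a) (hN : 0 < N) :
    gagliardoSq (logCutoff a N) ≤ ENNReal.ofReal (256 * (N + 2) / N ^ 2) := by
  set M := kernelMajorant a (a * exp N)
  calc gagliardoSq (logCutoff a N)
      ≤ ∫⁻ x, ∫⁻ y, ENNReal.ofReal (16 / N ^ 2) * (M x y + M y x) :=
        lintegral_mono_ae <| (Measure.ae_ne volume 0).mono fun x hx =>
          lintegral_mono_ae <| (Measure.ae_ne volume 0).mono fun y hy =>
            ofReal_kernel_logCutoff_le ha hN hx hy
    _ = ENNReal.ofReal (16 / N ^ 2) * (2 * ∫⁻ x, ∫⁻ y, M x y) := by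
        simp_rw [lintegral_const_mul' _ _ ENNReal.ofReal_ne_top]
        rw [lintegral_lintegral_add_swap (measurable_kernelMajorant _ _)]
    _ ≤ ENNReal.ofReal (16 / N ^ 2) * (2 * ENNReal.ofReal (8 * (2 + log (a * exp N / a)))) := by
        gcongr
        exact lintegral_lintegral_kernelMajorant_le ha
          (le_mul_of_one_le_right ha.le (one_le_exp hN.le))
    _ = ENNReal.ofReal (256 * (N + 2) / N ^ 2) := by
        rw [mul_div_cancel_left₀ _ ha.ne', log_exp, ← ENNReal.ofReal_ofNat 2,
          ← ENNReal.ofReal_mul (by norm_num), ← ENNReal.ofReal_mul (by positivity)]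
        ring_nf

end logCutoff

theorem gagliardoSq_comp_sub (v : ℝ → ℝ) (x₀ : ℝ) :
    gagliardoSq (fun x => v (x - x₀)) = gagliardoSq v := by
  have hinner : ∀ x, ∫⁻ y, ENNReal.ofReal ((v (x - x₀) - v (y - x₀)) ^ 2 / (x - y) ^ 2) =
      ∫⁻ y, ENNReal.ofReal ((v (x - x₀) - v y) ^ 2 / (x - x₀ - y) ^ 2) := fun x => by
    rw [← lintegral_sub_right_eq_self
      (fun y => ENNReal.ofReal ((v (x - x₀) - v y) ^ 2 / (x - x₀ - y) ^ 2)) x₀]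
    simp_rw [sub_sub_sub_cancel_right]
  unfold gagliardoSq
  rw [lintegral_congr hinner]
  exact lintegral_sub_right_eq_self
    (fun x => ∫⁻ y, ENNReal.ofReal ((v x - v y) ^ 2 / (x - y) ^ 2)) x₀

theorem exists_cutoff_ball (x₀ : ℝ) {a N : ℝ} (ha : 0 < a) (hN : 0 < N) :
    ∃ v : ℝ → ℝ, (∀ x ∈ Metric.ball x₀ a, v x = 1) ∧ MemLp v 2 volume ∧
      ∫⁻ x, ENNReal.ofReal (v x ^ 2) ≤ ENNReal.ofReal (2 * (a * exp N)) ∧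
      gagliardoSq v ≤ ENNReal.ofReal (256 * (N + 2) / N ^ 2) :=
  ⟨fun x => logCutoff a N (x - x₀),
    fun x hx => logCutoff_eq_one ha hN (Real.dist_eq x x₀ ▸ (Metric.mem_ball.1 hx).le),
    (memLp_logCutoff ha hN).comp_measurePreserving (measurePreserving_sub_right volume x₀),
    (lintegral_sub_right_eq_self (fun x => ENNReal.ofReal (logCutoff a N x ^ 2)) x₀).trans_le
      (lintegral_sq_logCutoff_le ha hN),
    (gagliardoSq_comp_sub _ x₀).trans_le (gagliardoSq_logCutoff_le ha hN)⟩

theorem exists_pos_mul_add_two_div_sq_le {t : ℝ} (ht : 0 < t) :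
    ∃ N > 0, 256 * (N + 2) / N ^ 2 ≤ t := by
  refine ⟨max 1 (768 / t), by positivity, ?_⟩
  have h₁ : 1 ≤ max 1 (768 / t) := le_max_left _ _
  have h₂ : 768 ≤ t * max 1 (768 / t) := by
    rw [← div_le_iff₀' ht]
    exact le_max_right _ _
  rw [div_le_iff₀ (by positivity)]
  nlinarith

theorem exists_cutoff_Icc (x₀ : ℝ) {r t : ℝ} (hr : 0 < r) (ht : 0 < t) :
    ∃ v : ℝ → ℝ, ∃ U : Set ℝ, IsOpen U ∧ Icc (x₀ - r) (x₀ + r) ⊆ U ∧ MemLp v 2 volume ∧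
      (∀ᵐ x ∂volume, x ∈ U → v x = 1) ∧ gagliardoSq v ≤ ENNReal.ofReal t := by
  obtain ⟨N, hN, hNt⟩ := exists_pos_mul_add_two_div_sq_le ht
  obtain ⟨v, hv₁, hv, -, hE⟩ := exists_cutoff_ball x₀ (by positivity : 0 < 2 * r) hN
  refine ⟨v, Metric.ball x₀ (2 * r), Metric.isOpen_ball, ?_, hv, ae_of_all _ hv₁,
    hE.trans (ENNReal.ofReal_le_ofReal hNt)⟩
  rw [← Real.closedBall_eq_Icc]
  exact Metric.closedBall_subset_ball (by linarith)

theorem exists_cutoff_nhds (x₀ : ℝ) {t : ℝ} (ht : 0 < t) :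
    ∃ v : ℝ → ℝ, ∃ U : Set ℝ, IsOpen U ∧ x₀ ∈ U ∧ MemLp v 2 volume ∧
      (∀ᵐ x ∂volume, x ∈ U → v x = 1) ∧
      (∫⁻ x, ENNReal.ofReal (v x ^ 2)) + gagliardoSq v ≤ ENNReal.ofReal t := by
  obtain ⟨N, hN, hNt⟩ := exists_pos_mul_add_two_div_sq_le (half_pos ht)
  -- the radius is chosen so that the support `[x₀ - a eᴺ, x₀ + a eᴺ]` has length `t / 2`
  have ha : 0 < t / 4 * exp (-N) := by positivity
  obtain ⟨v, hv₁, hv, hL2, hE⟩ := exists_cutoff_ball x₀ ha hN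
  refine ⟨v, Metric.ball x₀ _, Metric.isOpen_ball, Metric.mem_ball_self ha, hv, ae_of_all _ hv₁, ?_⟩
  calc (∫⁻ x, ENNReal.ofReal (v x ^ 2)) + gagliardoSq v
      ≤ ENNReal.ofReal (t / 2) + ENNReal.ofReal (t / 2) := by
        refine add_le_add (hL2.trans_eq ?_) (hE.trans (ENNReal.ofReal_le_ofReal hNt))
        rw [mul_assoc, ← exp_add, neg_add_cancel, exp_zero]
        ring_nf
    _ = ENNReal.ofReal t := by rw [← ENNReal.ofReal_add (by positivity) (by positivity), add_halves]

theorem sInf_eq_zero_of_forall_exists_le {S : Set ℝ≥0∞}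
    (h : ∀ ε : ℝ, 0 < ε → ∃ E ∈ S, E ≤ ENNReal.ofReal ε) : sInf S = 0 := by
  refine le_antisymm (ENNReal.le_of_forall_pos_le_add fun ε hε _ => ?_) zero_le
  obtain ⟨E, hE, hEε⟩ := h ε hε
  simpa using (sInf_le hE).trans hEε

/-- Vanishing of `H^{1/2}`-capacities: bounded intervals have zero homogeneous
`H^{1/2}`-capacity, and points have zero capacity even for the full `H^{1/2}`-norm. -/
theorem h12_capacities_vanish :
    (∀ x₀ r t : ℝ, 0 < r → 0 < t →
      ∃ v : ℝ → ℝ, ∃ U : Set ℝ, IsOpen U ∧ Icc (x₀ - r) (x₀ + r) ⊆ U ∧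
        MeasureTheory.MemLp v 2 MeasureTheory.volume ∧
        (∀ᵐ x ∂MeasureTheory.volume, x ∈ U → v x = 1) ∧
        gagliardoSq v ≤ ENNReal.ofReal t) ∧
    (∀ x₀ r : ℝ, 0 < r →
      sInf {E : ENNReal | ∃ v : ℝ → ℝ, ∃ U : Set ℝ,
        IsOpen U ∧ Ioo (x₀ - r) (x₀ + r) ⊆ U ∧
        MeasureTheory.MemLp v 2 MeasureTheory.volume ∧ gagliardoSq v < ⊤ ∧
        (∀ᵐ x ∂MeasureTheory.volume, x ∈ U → v x = 1) ∧
        E = gagliardoSq v} = 0) ∧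
    (∀ x₀ t : ℝ, 0 < t →
      ∃ v : ℝ → ℝ, ∃ U : Set ℝ, IsOpen U ∧ x₀ ∈ U ∧
        MeasureTheory.MemLp v 2 MeasureTheory.volume ∧
        (∀ᵐ x ∂MeasureTheory.volume, x ∈ U → v x = 1) ∧
        (∫⁻ x : ℝ, ENNReal.ofReal ((v x) ^ 2)) + gagliardoSq v ≤ ENNReal.ofReal t) ∧
    (∀ x₀ : ℝ,
      sInf {E : ENNReal | ∃ v : ℝ → ℝ, ∃ U : Set ℝ, IsOpen U ∧ x₀ ∈ U ∧
        MeasureTheory.MemLp v 2 MeasureTheory.volume ∧ gagliardoSq v < ⊤ ∧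
        (∀ᵐ x ∂MeasureTheory.volume, x ∈ U → v x = 1) ∧
        E = (∫⁻ x : ℝ, ENNReal.ofReal ((v x) ^ 2)) + gagliardoSq v} = 0) := by
  refine ⟨fun x₀ r t hr ht => exists_cutoff_Icc x₀ hr ht, fun x₀ r hr => ?_,
    fun x₀ t ht => exists_cutoff_nhds x₀ ht, fun x₀ => ?_⟩
  · refine sInf_eq_zero_of_forall_exists_le fun ε hε => ?_
    obtain ⟨v, U, hU, hsub, hv, hv₁, hE⟩ := exists_cutoff_Icc x₀ hr hε
    exact ⟨_, ⟨v, U, hU, Ioo_subset_Icc_self.trans hsub, hv, hE.trans_lt ENNReal.ofReal_lt_top,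
      hv₁, rfl⟩, hE⟩
  · refine sInf_eq_zero_of_forall_exists_le fun ε hε => ?_
    obtain ⟨v, U, hU, hx₀, hv, hv₁, hE⟩ := exists_cutoff_nhds x₀ hε
    exact ⟨_, ⟨v, U, hU, hx₀, hv, (le_add_self.trans hE).trans_lt ENNReal.ofReal_lt_top,
      hv₁, rfl⟩, hE⟩
end

section
/- For every μ > 0, ξ ∈ ℝ, and x ∈ ℝ, the principal-value limit defining (−Δ)^{1/2}𝒰_{μ,ξ}(x), where 𝒰_{μ,ξ}(y) := log( 2μ/(μ² + (y−ξ)²) ), exists and equals e^{𝒰_{μ,ξ}(x)} = 2μ/(μ² + (x−ξ)²). In other words, each bubble 𝒰_{μ,ξ} is a classical solution of the Liouville equation (−Δ)^{1/2}u = e^u on ℝ. -/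
open MeasureTheory Filter Set

/-!
With `a = x - ξ`, the integrand `(𝒰(x) - 𝒰(x + z)) / z²` is
`g(z) = (log (μ² + (a + z)²) - log (μ² + a²)) / z²`, which has an explicit primitive `F` on
`ℝ ∖ {0}` (integrate by parts, then split `2(a + z) / (z (μ² + (a + z)²))` into partial fractions).
`F` tends to `±πμ / (μ² + a²)` at `±∞`, so `∫_{|z| ≥ δ} g = 2πμ / (μ² + a²) - (F δ - F (-δ))`.
The only singular parts of `F` at `0` are a difference quotient of `log (μ² + (a + ·)²)`, which
has a limit, and a multiple of `log z²`, which is even; hence `F δ - F (-δ) → 0`.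
-/

open Real Topology

section PrincipalValue

variable {E : Type*} [NormedAddCommGroup E]

theorem integrableOn_Iic_neg_iff {f : ℝ → E} {c : ℝ} :
    IntegrableOn f (Iic (-c)) ↔ IntegrableOn (fun z => f (-z)) (Ioi c) := by
  rw [← integrableOn_Ici_iff_integrableOn_Ioi,
    ← (Measure.measurePreserving_neg (volume : Measure ℝ)).integrableOn_comp_preimage
      (Homeomorph.neg ℝ).measurableEmbedding]
  simp [Function.comp_def]

theorem tendsto_sub_comp_neg_nhdsGT_zero {G : ℝ → E} {l : E} (h : Tendsto G (𝓝[≠] 0) (𝓝 l)) :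
    Tendsto (fun δ => G δ - G (-δ)) (𝓝[>] 0) (𝓝 0) := by
  have hneg : Tendsto (fun δ : ℝ => -δ) (𝓝[>] 0) (𝓝[≠] 0) :=
    tendsto_nhdsWithin_of_tendsto_nhds_of_eventually_within _
      (by simpa using (continuous_neg.tendsto (0 : ℝ)).mono_left nhdsWithin_le_nhds)
      (eventually_nhdsWithin_of_forall fun δ hδ => neg_ne_zero.mpr (ne_of_gt hδ))
  simpa using (h.mono_left (nhdsGT_le_nhdsNE 0)).sub (h.comp hneg)

variable [NormedSpace ℝ E] [CompleteSpace E]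

theorem tendsto_setIntegral_abs_ge_of_hasDerivAt {g F : ℝ → E} {lTop lBot : E}
    (hF : ∀ z ≠ 0, HasDerivAt F (g z) z)
    (hg_Ioi : ∀ δ > 0, IntegrableOn g (Ioi δ)) (hg_Iic : ∀ δ > 0, IntegrableOn g (Iic (-δ)))
    (hF_top : Tendsto F atTop (𝓝 lTop)) (hF_bot : Tendsto F atBot (𝓝 lBot))
    (hF_zero : Tendsto (fun δ => F δ - F (-δ)) (𝓝[>] 0) (𝓝 0)) :
    Tendsto (fun δ => ∫ z in {z | δ ≤ |z|}, g z) (𝓝[>] 0) (𝓝 (lTop - lBot)) := by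
  have hintegral : ∀ δ > 0, ∫ z in {z | δ ≤ |z|}, g z = (lTop - lBot) - (F δ - F (-δ)) := by
    intro δ hδ
    have hsplit : {z : ℝ | δ ≤ |z|} = Iic (-δ) ∪ Ici δ := by
      ext z
      simp only [mem_ofPred_eq, mem_union, mem_Iic, mem_Ici, le_abs, le_neg]
      tauto
    rw [hsplit, setIntegral_union (Iic_disjoint_Ici.mpr (by linarith)) measurableSet_Ici
        (hg_Iic δ hδ) ((integrableOn_Ici_iff_integrableOn_Ioi).mpr (hg_Ioi δ hδ)),
      integral_Ici_eq_integral_Ioi,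
      integral_Iic_of_hasDerivAt_of_tendsto' (fun z hz => hF z (by simp at hz; linarith))
        (hg_Iic δ hδ) hF_bot,
      integral_Ioi_of_hasDerivAt_of_tendsto' (fun z hz => hF z (by simp at hz; linarith))
        (hg_Ioi δ hδ) hF_top]
    abel
  have h := (tendsto_const_nhds (x := lTop - lBot)).sub hF_zero
  rw [sub_zero] at h
  exact h.congr' (eventually_nhdsWithin_of_forall fun δ hδ => (hintegral δ hδ).symm)

end PrincipalValue

theorem tendsto_log_sq_sub_log_atTop (μ a : ℝ) :
    Tendsto (fun z => log (z ^ 2) - log (μ ^ 2 + (a + z) ^ 2)) atTop (𝓝 0) := by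
  have hinv : ∀ c : ℝ, Tendsto (fun z : ℝ => c / z) atTop (𝓝 0) :=
    fun c => tendsto_const_nhds.div_atTop tendsto_id
  have hratio : Tendsto (fun z : ℝ => (μ / z) ^ 2 + (a / z + 1) ^ 2) atTop (𝓝 1) := by
    simpa using ((hinv μ).pow 2).add (((hinv a).add_const 1).pow 2)
  have hlog := ((continuousAt_log one_ne_zero).tendsto.comp hratio).neg
  rw [log_one, neg_zero] at hlog
  refine hlog.congr' ?_
  filter_upwards [eventually_gt_atTop |a|] with z hz
  have hz0 : z ≠ 0 := (lt_of_le_of_lt (abs_nonneg a) hz).ne'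
  have hQ_pos : 0 < μ ^ 2 + (a + z) ^ 2 := by
    have : 0 < a + z := by linarith [neg_abs_le a]
    positivity
  have hQ : (μ / z) ^ 2 + (a / z + 1) ^ 2 = (μ ^ 2 + (a + z) ^ 2) / z ^ 2 := by
    field_simp
  rw [Function.comp_apply, hQ, log_div hQ_pos.ne' (pow_ne_zero 2 hz0)]
  ring

theorem tendsto_log_sub_div_atTop (μ a : ℝ) :
    Tendsto (fun z => (log (μ ^ 2 + (a + z) ^ 2) - log (μ ^ 2 + a ^ 2)) / z) atTop (𝓝 0) := by
  have h := (isLittleO_log_id_atTop.tendsto_div_nhds_zero.const_mul 2).sub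
    (((tendsto_log_sq_sub_log_atTop μ a).add_const (log (μ ^ 2 + a ^ 2))).mul
      tendsto_inv_atTop_zero)
  simp only [mul_zero, zero_add, sub_zero, id] at h
  refine h.congr' ?_
  filter_upwards [eventually_gt_atTop 0] with z hz
  rw [log_pow]
  field_simp
  ring

/-- For `a = x - ξ`, this is `(𝒰_{μ,ξ}(x) - 𝒰_{μ,ξ}(x + z)) / z²`. -/
noncomputable def bubbleIntegrand (μ a z : ℝ) : ℝ :=
  (log (μ ^ 2 + (a + z) ^ 2) - log (μ ^ 2 + a ^ 2)) / z ^ 2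

noncomputable def bubblePrimitive (μ a z : ℝ) : ℝ :=
  -(log (μ ^ 2 + (a + z) ^ 2) - log (μ ^ 2 + a ^ 2)) / z
    + a / (μ ^ 2 + a ^ 2) * (log (z ^ 2) - log (μ ^ 2 + (a + z) ^ 2))
    + 2 * μ / (μ ^ 2 + a ^ 2) * arctan ((a + z) / μ)

section Bubble

variable {μ : ℝ} (a : ℝ)

theorem bubbleIntegrand_neg (z : ℝ) : bubbleIntegrand μ a (-z) = bubbleIntegrand μ (-a) z := by
  simp only [bubbleIntegrand, neg_sq]
  ring_nf

theorem bubblePrimitive_neg (z : ℝ) : bubblePrimitive μ a (-z) = -bubblePrimitive μ (-a) z := by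
  have h : (a + -z) / μ = -((-a + z) / μ) := by ring
  simp only [bubblePrimitive, h, arctan_neg, neg_sq, show (a + -z) ^ 2 = (-a + z) ^ 2 by ring]
  ring

theorem hasDerivAt_bubblePrimitive (hμ : 0 < μ) {z : ℝ} (hz : z ≠ 0) :
    HasDerivAt (bubblePrimitive μ a) (bubbleIntegrand μ a z) z := by
  have hQ_pos : 0 < μ ^ 2 + (a + z) ^ 2 := by positivity
  have hlogQ : HasDerivAt (fun t => log (μ ^ 2 + (a + t) ^ 2))
      (2 * (a + z) / (μ ^ 2 + (a + z) ^ 2)) z := by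
    simpa using ((((hasDerivAt_id z).const_add a).pow 2).const_add (μ ^ 2)).log hQ_pos.ne'
  have hlogsq : HasDerivAt (fun t : ℝ => log (t ^ 2)) (2 * z / z ^ 2) z := by
    simpa using (hasDerivAt_pow 2 z).log (pow_ne_zero 2 hz)
  have harctan := (((hasDerivAt_id' z).const_add a).div_const μ).arctan
  have h := ((((hlogQ.sub_const (log (μ ^ 2 + a ^ 2))).neg.div (hasDerivAt_id' z) hz).add
    ((hlogsq.sub hlogQ).const_mul (a / (μ ^ 2 + a ^ 2)))).add
    (harctan.const_mul (2 * μ / (μ ^ 2 + a ^ 2))))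
  refine h.congr_deriv ?_
  simp only [bubbleIntegrand, Pi.neg_apply]
  field_simp
  ring

theorem tendsto_bubblePrimitive_atTop (hμ : 0 < μ) :
    Tendsto (bubblePrimitive μ a) atTop (𝓝 (2 * μ / (μ ^ 2 + a ^ 2) * (π / 2))) := by
  have harctan : Tendsto (fun z => arctan ((a + z) / μ)) atTop (𝓝 (π / 2)) :=
    tendsto_nhds_of_tendsto_nhdsWithin tendsto_arctan_atTop |>.comp
      ((tendsto_atTop_add_const_left _ a tendsto_id).atTop_div_const hμ)
  have h := ((tendsto_log_sub_div_atTop μ a).neg.add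
    ((tendsto_log_sq_sub_log_atTop μ a).const_mul (a / (μ ^ 2 + a ^ 2)))).add
    (harctan.const_mul (2 * μ / (μ ^ 2 + a ^ 2)))
  simp only [neg_zero, mul_zero, zero_add] at h
  exact h.congr fun z => by simp only [bubblePrimitive, neg_div]

theorem tendsto_bubblePrimitive_atBot (hμ : 0 < μ) :
    Tendsto (bubblePrimitive μ a) atBot (𝓝 (-(2 * μ / (μ ^ 2 + a ^ 2) * (π / 2)))) := by
  have h := ((tendsto_bubblePrimitive_atTop (-a) hμ).comp tendsto_neg_atBot_atTop).neg
  rw [neg_sq] at h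
  exact h.congr fun z => by rw [Function.comp_apply, bubblePrimitive_neg, neg_neg, neg_neg]

theorem tendsto_bubblePrimitive_sub_comp_neg (hμ : 0 < μ) :
    Tendsto (fun δ => bubblePrimitive μ a δ - bubblePrimitive μ a (-δ)) (𝓝[>] 0) (𝓝 0) := by
  set ℓ : ℝ → ℝ := fun t => log (μ ^ 2 + (a + t) ^ 2)
  have hℓ : DifferentiableAt ℝ ℓ 0 := by
    have : μ ^ 2 + (a + 0) ^ 2 ≠ 0 := by positivity
    fun_prop (disch := exact this)
  have hslope : Tendsto (fun z => (ℓ z - ℓ 0) / z) (𝓝[≠] 0) (𝓝 (deriv ℓ 0)) :=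
    hℓ.hasDerivAt.tendsto_slope.congr fun z => by rw [slope_def_field, sub_zero]
  have hcont : Continuous fun z => 2 * μ / (μ ^ 2 + a ^ 2) * arctan ((a + z) / μ)
      - a / (μ ^ 2 + a ^ 2) * ℓ z :=
    (continuous_const.mul (continuous_arctan.comp (by fun_prop))).sub
      (continuous_const.mul ((by fun_prop : Continuous fun z => μ ^ 2 + (a + z) ^ 2).log
        fun z => by positivity))
  refine (tendsto_sub_comp_neg_nhdsGT_zero
    (hslope.neg.add ((hcont.tendsto 0).mono_left nhdsWithin_le_nhds))).congr fun δ => ?_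
  simp only [bubblePrimitive, ℓ, neg_sq, add_zero]
  ring

theorem integrableOn_bubbleIntegrand_Ioi (hμ : 0 < μ) {δ : ℝ} (hδ : 0 < δ) :
    IntegrableOn (bubbleIntegrand μ a) (Ioi δ) := by
  have hlog_ge (t : ℝ) : log (μ ^ 2) ≤ log (μ ^ 2 + t ^ 2) :=
    log_le_log (by positivity) (le_add_of_nonneg_right (sq_nonneg t))
  set c := log (μ ^ 2 + a ^ 2) - log (μ ^ 2)
  have hc : 0 ≤ c := sub_nonneg.mpr (hlog_ge a)
  have hinv : ∀ z ∈ Ici δ, HasDerivAt (fun z => -(c * z⁻¹)) (c / z ^ 2) z := fun z hz =>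
    ((hasDerivAt_inv (hδ.trans_le hz).ne').const_mul c).neg.congr_deriv (by ring)
  have hinv_top : Tendsto (fun z : ℝ => -(c * z⁻¹)) atTop (𝓝 0) := by
    simpa using (tendsto_inv_atTop_zero.const_mul c).neg
  -- `g` has no sign: it is a difference of nonnegative functions whose primitives converge at `∞`
  have hp : IntegrableOn (fun z => (log (μ ^ 2 + (a + z) ^ 2) - log (μ ^ 2)) / z ^ 2) (Ioi δ) := by
    refine integrableOn_Ioi_deriv_of_nonneg'
      (fun z hz => ((hasDerivAt_bubblePrimitive a hμ (hδ.trans_le hz).ne').add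
        (hinv z hz)).congr_deriv ?_)
      (fun z _ => div_nonneg (sub_nonneg.mpr (hlog_ge (a + z))) (sq_nonneg z))
      ((tendsto_bubblePrimitive_atTop a hμ).add hinv_top)
    rw [bubbleIntegrand]
    ring
  have hq : IntegrableOn (fun z => c / z ^ 2) (Ioi δ) :=
    integrableOn_Ioi_deriv_of_nonneg' hinv (fun z _ => div_nonneg hc (sq_nonneg z)) hinv_top
  refine (hp.sub hq).congr_fun (fun z _ => ?_) measurableSet_Ioi
  simp only [bubbleIntegrand, c, Pi.sub_apply]
  ring

theorem integrableOn_bubbleIntegrand_Iic (hμ : 0 < μ) {δ : ℝ} (hδ : 0 < δ) :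
    IntegrableOn (bubbleIntegrand μ a) (Iic (-δ)) := by
  rw [integrableOn_Iic_neg_iff]
  simpa only [bubbleIntegrand_neg] using integrableOn_bubbleIntegrand_Ioi (-a) hμ hδ

end Bubble

/-- Every bubble `𝒰_{μ,ξ}(y) = log(2μ/(μ² + (y-ξ)²))` is a classical solution of the
Liouville equation `(-Δ)^{1/2} u = e^u` on `ℝ`. -/
theorem bubble_solves_liouville (μ ξ : ℝ) (hμ : 0 < μ) (x : ℝ) :
    HasHalfLapAt (fun y => Real.log (2 * μ / (μ ^ 2 + (y - ξ) ^ 2))) x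
      (Real.exp (Real.log (2 * μ / (μ ^ 2 + (x - ξ) ^ 2)))) ∧
    Real.exp (Real.log (2 * μ / (μ ^ 2 + (x - ξ) ^ 2))) =
      2 * μ / (μ ^ 2 + (x - ξ) ^ 2) := by
  have hexp : exp (log (2 * μ / (μ ^ 2 + (x - ξ) ^ 2))) = 2 * μ / (μ ^ 2 + (x - ξ) ^ 2) :=
    exp_log (by positivity)
  refine ⟨?_, hexp⟩
  have hpv : ∀ δ, pvHalfLap (fun y => log (2 * μ / (μ ^ 2 + (y - ξ) ^ 2))) x δ =
      1 / π * ∫ z in {z | δ ≤ |z|}, bubbleIntegrand μ (x - ξ) z := fun δ => by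
    refine congrArg _ (integral_congr_ae (ae_of_all _ fun z => ?_))
    dsimp only [bubbleIntegrand]
    rw [show x + z - ξ = x - ξ + z by ring,
      log_div (by positivity) (by positivity), log_div (by positivity) (by positivity)]
    ring_nf
  have hlim := (tendsto_setIntegral_abs_ge_of_hasDerivAt
    (fun z hz => hasDerivAt_bubblePrimitive (x - ξ) hμ hz)
    (fun δ hδ => integrableOn_bubbleIntegrand_Ioi (x - ξ) hμ hδ)
    (fun δ hδ => integrableOn_bubbleIntegrand_Iic (x - ξ) hμ hδ)
    (tendsto_bubblePrimitive_atTop (x - ξ) hμ) (tendsto_bubblePrimitive_atBot (x - ξ) hμ)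
    (tendsto_bubblePrimitive_sub_comp_neg (x - ξ) hμ)).const_mul (1 / π)
  rw [HasHalfLapAt, hexp, funext hpv]
  convert hlim using 2
  field_simp
  ring
end
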